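/- Suppose φ : ℝ² → ℝ is a C² solution of Δφ + (q(x) − c) ∂_y φ + f(φ) = 0 on ℝ² with 0 < φ < 1, satisfying the conical conditions at infinity for angles α, β ∈ (0,π), where q is continuous L-periodic and f is Lipschitz. If φ(x, y + τ) ≥ φ(x, y) for all (x,y) ∈ ℝ² and all τ ≥ 0, then ∂_y φ(x,y) > 0 for all (x,y) ∈ ℝ². -/

import Mathlib

/-!
Since `φ` is nondecreasing in `y`, for `h > 0` the difference `z = φ(·, · + h) - φ` is nonnegative,
and because the coefficients do not depend on `y` it satisfies `Δz + (q - c) ∂_y z ≤ K z`, where `K`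
is the Lipschitz constant of `f`. The conical conditions make `φ` non-constant on every vertical
line, so `∂_y φ ≥ m > 0` on a small box around some point `p*`. On an annulus `ρ ≤ |p - p*| ≤ R` the
Gaussian barrier `w = m h (exp (-a |p - p*|²) - exp (-a R²))` satisfies
`Δw + (q - c) ∂_y w ≥ (K + 1) m h exp (-a |p - p*|²)` once `a` is large, so `w - z` has no positive
interior maximum; it is `≤ 0` on both boundary circles, hence everywhere. Dividing by `h` and
letting `h → 0` gives `∂_y φ ≥ m (exp (-a |p - p*|²) - exp (-a R²)) > 0` at every point.
-/

/-- Partial derivative in the first variable. -/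
noncomputable def dX (u : ℝ → ℝ → ℝ) : ℝ → ℝ → ℝ := fun x y => deriv (fun s => u s y) x

/-- Partial derivative in the second variable. -/
noncomputable def dY (u : ℝ → ℝ → ℝ) : ℝ → ℝ → ℝ := fun x y => deriv (fun s => u x s) y

/-- The lower cone C⁻_{α,β,l}. -/
def Cminus (α β l : ℝ) : Set (ℝ × ℝ) :=
  {p | (p.1 ≤ 0 → p.2 ≤ p.1 * (Real.cos α / Real.sin α) + l) ∧
       (0 ≤ p.1 → p.2 ≤ -p.1 * (Real.cos β / Real.sin β) + l)}

/-- The upper cone C⁺_{α,β,l}. -/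
def Cplus (α β l : ℝ) : Set (ℝ × ℝ) := closure (Cminus α β l)ᶜ

open Set Filter Topology

lemma IsLocalMax.nonpos_of_hasDerivAt_hasDerivAt {f f' : ℝ → ℝ} {x a : ℝ}
    (hmax : IsLocalMax f x) (hf : ∀ᶠ t in 𝓝 x, HasDerivAt f (f' t) t)
    (hf' : HasDerivAt f' a x) : a ≤ 0 := by
  by_contra! ha
  have hderiv : deriv f =ᶠ[𝓝 x] f' := hf.mono fun t ht => ht.deriv
  have hmin : IsLocalMin f x :=
    isLocalMin_of_deriv_deriv_pos (by rwa [hderiv.deriv_eq, hf'.deriv])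
      (by rw [hderiv.eq_of_nhds]; exact hmax.hasDerivAt_eq_zero hf.self_of_nhds)
      hf.self_of_nhds.continuousAt
  -- a local minimum that is also a local maximum is a plateau, on which `f'` vanishes
  have hconst : f =ᶠ[𝓝 x] fun _ => f x := (hmin.and hmax).mono fun t ht => le_antisymm ht.2 ht.1
  have hzero : f' =ᶠ[𝓝 x] fun _ => 0 := by
    filter_upwards [hconst.eventuallyEq_nhds, hf] with t ht htf
    rw [← htf.deriv, ht.deriv_eq, deriv_const]
  exact ha.ne' ((hf'.congr_of_eventuallyEq hzero.symm).unique (hasDerivAt_const x 0))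

lemma IsCompact.forall_nonpos_of_isLocalMax {X : Type*} [TopologicalSpace X] {S U : Set X}
    {v : X → ℝ} (hS : IsCompact S) (hU : IsOpen U) (hUS : U ⊆ S) (hv : ContinuousOn v S)
    (hbdry : ∀ p ∈ S \ U, v p ≤ 0) (hloc : ∀ p ∈ U, IsLocalMax v p → v p ≤ 0) :
    ∀ p ∈ S, v p ≤ 0 := by
  intro p hp
  obtain ⟨p₀, hp₀S, hmax⟩ := hS.exists_isMaxOn ⟨p, hp⟩ hv
  refine (hmax hp).trans ?_
  by_cases hp₀U : p₀ ∈ U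
  · exact hloc p₀ hp₀U (hmax.isLocalMax (mem_of_superset (hU.mem_nhds hp₀U) hUS))
  · exact hbdry p₀ ⟨hp₀S, hp₀U⟩

lemma HasDerivAt.le_of_forall_mul_le_sub {g : ℝ → ℝ} {g' c y δ : ℝ} (hg : HasDerivAt g g' y)
    (hδ : 0 < δ) (hc : ∀ h ∈ Ioc 0 δ, c * h ≤ g (y + h) - g y) : c ≤ g' := by
  refine ge_of_tendsto hg.tendsto_slope_zero_right ?_
  filter_upwards [Ioc_mem_nhdsGT hδ] with h hh
  rw [smul_eq_mul, le_inv_mul_iff₀ hh.1, mul_comm]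
  exact hc h hh

lemma exists_pos_mul_add_le_sq_mul (C : ℝ) {D ρ : ℝ} (hD : 0 ≤ D) (hρ : 0 < ρ) :
    ∃ a > 0, C * a + D ≤ a ^ 2 * ρ := by
  set a := max 1 ((|C| + D) / ρ)
  have ha : 1 ≤ a := le_max_left _ _
  have haρ : |C| + D ≤ a * ρ := (div_le_iff₀ hρ).1 (le_max_right _ _)
  refine ⟨a, by positivity, ?_⟩
  nlinarith [mul_le_mul_of_nonneg_left haρ (by positivity : (0 : ℝ) ≤ a),
    mul_le_mul_of_nonneg_right (le_abs_self C) (by positivity : (0 : ℝ) ≤ a)]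

lemma abs_sub_le_of_sq_add_sq_le {x y x₀ y₀ r : ℝ} (hr : 0 ≤ r)
    (h : (x - x₀) ^ 2 + (y - y₀) ^ 2 ≤ r ^ 2) : |x - x₀| ≤ r ∧ |y - y₀| ≤ r :=
  ⟨abs_le_of_sq_le_sq (by nlinarith [sq_nonneg (y - y₀)]) hr,
    abs_le_of_sq_le_sq (by nlinarith [sq_nonneg (x - x₀)]) hr⟩

lemma isCompact_setOf_sq_add_sq_mem_Icc (x₀ y₀ r : ℝ) {R : ℝ} (hR : 0 ≤ R) :
    IsCompact {p : ℝ × ℝ | (p.1 - x₀) ^ 2 + (p.2 - y₀) ^ 2 ∈ Icc r (R ^ 2)} := by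
  refine Metric.isCompact_of_isClosed_isBounded (isClosed_Icc.preimage (by fun_prop))
    ((Metric.isBounded_closedBall (x := (x₀, y₀)) (r := R)).subset ?_)
  rintro ⟨x, y⟩ ⟨-, hxy⟩
  rw [Metric.mem_closedBall, Prod.dist_eq, Real.dist_eq, Real.dist_eq]
  exact max_le_iff.2 (abs_sub_le_of_sq_add_sq_le hR hxy)

section PartialDeriv

variable {u v : ℝ → ℝ → ℝ}

lemma dX_eq_fderiv (hu : Differentiable ℝ (fun p : ℝ × ℝ => u p.1 p.2)) (x y : ℝ) :
    dX u x y = fderiv ℝ (fun p : ℝ × ℝ => u p.1 p.2) (x, y) (1, 0) := by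
  have hslice : HasDerivAt (fun s : ℝ => (s, y)) ((1 : ℝ), (0 : ℝ)) x :=
    (hasDerivAt_id x).prodMk (hasDerivAt_const x y)
  exact ((hu (x, y)).hasFDerivAt.comp_hasDerivAt x hslice).deriv

lemma dY_eq_fderiv (hu : Differentiable ℝ (fun p : ℝ × ℝ => u p.1 p.2)) (x y : ℝ) :
    dY u x y = fderiv ℝ (fun p : ℝ × ℝ => u p.1 p.2) (x, y) (0, 1) := by
  have hslice : HasDerivAt (fun t : ℝ => (x, t)) ((0 : ℝ), (1 : ℝ)) y :=
    (hasDerivAt_const y x).prodMk (hasDerivAt_id y)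
  exact ((hu (x, y)).hasFDerivAt.comp_hasDerivAt y hslice).deriv

lemma hasDerivAt_dX (hu : Differentiable ℝ (fun p : ℝ × ℝ => u p.1 p.2)) (x y : ℝ) :
    HasDerivAt (fun s => u s y) (dX u x y) x :=
  (show DifferentiableAt ℝ (fun s => u s y) x from
    (hu (x, y)).comp (f := fun s : ℝ => (s, y)) x
      (differentiableAt_id.prodMk (differentiableAt_const y))).hasDerivAt

lemma hasDerivAt_dY (hu : Differentiable ℝ (fun p : ℝ × ℝ => u p.1 p.2)) (x y : ℝ) :
    HasDerivAt (fun t => u x t) (dY u x y) y :=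
  (show DifferentiableAt ℝ (fun t => u x t) y from
    (hu (x, y)).comp (f := fun t : ℝ => (x, t)) y
      ((differentiableAt_const x).prodMk differentiableAt_id)).hasDerivAt

lemma contDiff_dX {m n : WithTop ℕ∞} (hu : ContDiff ℝ n (fun p : ℝ × ℝ => u p.1 p.2))
    (hmn : m + 1 ≤ n) : ContDiff ℝ m (fun p : ℝ × ℝ => dX u p.1 p.2) := by
  have hdiff := hu.differentiable (ne_bot_of_le_ne_bot (by simp) hmn)
  simp_rw [dX_eq_fderiv hdiff]
  exact (hu.fderiv_right hmn).clm_apply contDiff_const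

lemma contDiff_dY {m n : WithTop ℕ∞} (hu : ContDiff ℝ n (fun p : ℝ × ℝ => u p.1 p.2))
    (hmn : m + 1 ≤ n) : ContDiff ℝ m (fun p : ℝ × ℝ => dY u p.1 p.2) := by
  have hdiff := hu.differentiable (ne_bot_of_le_ne_bot (by simp) hmn)
  simp_rw [dY_eq_fderiv hdiff]
  exact (hu.fderiv_right hmn).clm_apply contDiff_const

lemma dX_sub (hu : Differentiable ℝ (fun p : ℝ × ℝ => u p.1 p.2))
    (hv : Differentiable ℝ (fun p : ℝ × ℝ => v p.1 p.2)) :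
    dX (fun x y => u x y - v x y) = fun x y => dX u x y - dX v x y :=
  funext₂ fun x y => ((hasDerivAt_dX hu x y).sub (hasDerivAt_dX hv x y)).deriv

lemma dY_sub (hu : Differentiable ℝ (fun p : ℝ × ℝ => u p.1 p.2))
    (hv : Differentiable ℝ (fun p : ℝ × ℝ => v p.1 p.2)) :
    dY (fun x y => u x y - v x y) = fun x y => dY u x y - dY v x y :=
  funext₂ fun x y => ((hasDerivAt_dY hu x y).sub (hasDerivAt_dY hv x y)).deriv

lemma dY_comp_add_const (h : ℝ) : dY (fun x y => u x (y + h)) = fun x y => dY u x (y + h) :=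
  funext₂ fun _ _ => deriv_comp_add_const ..

end PartialDeriv

noncomputable def driftLaplacian (b : ℝ → ℝ) (u : ℝ → ℝ → ℝ) (x y : ℝ) : ℝ :=
  dX (dX u) x y + dY (dY u) x y + b x * dY u x y

section DriftLaplacian

variable {b : ℝ → ℝ} {u v : ℝ → ℝ → ℝ}

lemma driftLaplacian_sub (hu : ContDiff ℝ 2 (fun p : ℝ × ℝ => u p.1 p.2))
    (hv : ContDiff ℝ 2 (fun p : ℝ × ℝ => v p.1 p.2)) (x y : ℝ) :
    driftLaplacian b (fun x y => u x y - v x y) x y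
      = driftLaplacian b u x y - driftLaplacian b v x y := by
  have hu₁ := hu.differentiable two_ne_zero
  have hv₁ := hv.differentiable two_ne_zero
  have hux := (contDiff_dX hu (m := 1) (by norm_num)).differentiable one_ne_zero
  have huy := (contDiff_dY hu (m := 1) (by norm_num)).differentiable one_ne_zero
  have hvx := (contDiff_dX hv (m := 1) (by norm_num)).differentiable one_ne_zero
  have hvy := (contDiff_dY hv (m := 1) (by norm_num)).differentiable one_ne_zero
  simp only [driftLaplacian, dX_sub hu₁ hv₁, dY_sub hu₁ hv₁, dX_sub hux hvx, dY_sub huy hvy]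
  ring

lemma driftLaplacian_comp_add_const (h x y : ℝ) :
    driftLaplacian b (fun x y => u x (y + h)) x y = driftLaplacian b u x (y + h) := by
  simp only [driftLaplacian, dY_comp_add_const]
  rfl

lemma driftLaplacian_nonpos_of_isLocalMax (hu : ContDiff ℝ 2 (fun p : ℝ × ℝ => u p.1 p.2))
    {x y : ℝ} (hmax : IsLocalMax (fun p : ℝ × ℝ => u p.1 p.2) (x, y)) :
    driftLaplacian b u x y ≤ 0 := by
  have hu₁ := hu.differentiable two_ne_zero
  have hux := (contDiff_dX hu (m := 1) (by norm_num)).differentiable one_ne_zero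
  have huy := (contDiff_dY hu (m := 1) (by norm_num)).differentiable one_ne_zero
  have hmaxX : IsLocalMax (fun s => u s y) x :=
    hmax.comp_continuous (g := fun s => (s, y)) (by fun_prop)
  have hmaxY : IsLocalMax (fun t => u x t) y :=
    hmax.comp_continuous (g := fun t => (x, t)) (by fun_prop)
  have hXX : dX (dX u) x y ≤ 0 := hmaxX.nonpos_of_hasDerivAt_hasDerivAt
    (.of_forall fun s => hasDerivAt_dX hu₁ s y) (hasDerivAt_dX hux x y)
  have hYY : dY (dY u) x y ≤ 0 := hmaxY.nonpos_of_hasDerivAt_hasDerivAt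
    (.of_forall fun t => hasDerivAt_dY hu₁ x t) (hasDerivAt_dY huy x y)
  have hY : dY u x y = 0 := hmaxY.hasDerivAt_eq_zero (hasDerivAt_dY hu₁ x y)
  simp only [driftLaplacian, hY, mul_zero]
  linarith

end DriftLaplacian

noncomputable def gaussianBump (a t₀ t : ℝ) : ℝ := Real.exp (-a * (t - t₀) ^ 2)

section GaussianBarrier

variable {a t₀ : ℝ}

lemma gaussianBump_pos (t : ℝ) : 0 < gaussianBump a t₀ t := Real.exp_pos _

lemma gaussianBump_le_one (ha : 0 ≤ a) (t : ℝ) : gaussianBump a t₀ t ≤ 1 :=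
  Real.exp_le_one_iff.2 (by nlinarith [sq_nonneg (t - t₀)])

lemma contDiff_gaussianBump {n : WithTop ℕ∞} : ContDiff ℝ n (gaussianBump a t₀) := by
  unfold gaussianBump; fun_prop

lemma hasDerivAt_gaussianBump (t : ℝ) :
    HasDerivAt (gaussianBump a t₀) (-2 * a * (t - t₀) * gaussianBump a t₀ t) t := by
  have hsq : HasDerivAt (fun s => -a * (s - t₀) ^ 2) (-a * (2 * (t - t₀))) t := by
    simpa using (((hasDerivAt_id t).sub_const t₀).pow 2).const_mul (-a)
  exact ((Real.hasDerivAt_exp _).comp t hsq).congr_deriv (by unfold gaussianBump; ring)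

lemma hasDerivAt_deriv_gaussianBump (t : ℝ) :
    HasDerivAt (fun s => -2 * a * (s - t₀) * gaussianBump a t₀ s)
      ((4 * a ^ 2 * (t - t₀) ^ 2 - 2 * a) * gaussianBump a t₀ t) t := by
  have hlin : HasDerivAt (fun s => -2 * a * (s - t₀)) (-2 * a) t := by
    simpa using ((hasDerivAt_id t).sub_const t₀).const_mul (-2 * a)
  exact (hlin.mul (hasDerivAt_gaussianBump t)).congr_deriv (by ring)

variable {b : ℝ → ℝ} {x₀ y₀ : ℝ}

lemma driftLaplacian_gaussianBarrier (M E x y : ℝ) :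
    driftLaplacian b (fun x y => M * (gaussianBump a x₀ x * gaussianBump a y₀ y - E)) x y
      = M * (gaussianBump a x₀ x * gaussianBump a y₀ y)
        * (4 * a ^ 2 * ((x - x₀) ^ 2 + (y - y₀) ^ 2) - 4 * a - 2 * a * b x * (y - y₀)) := by
  have hX : dX (fun x y => M * (gaussianBump a x₀ x * gaussianBump a y₀ y - E))
      = fun x y => M * (-2 * a * (x - x₀) * gaussianBump a x₀ x * gaussianBump a y₀ y) :=
    funext₂ fun x y =>
      ((((hasDerivAt_gaussianBump x).mul_const _).sub_const E).const_mul M).deriv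
  have hY : dY (fun x y => M * (gaussianBump a x₀ x * gaussianBump a y₀ y - E))
      = fun x y => M * (gaussianBump a x₀ x * (-2 * a * (y - y₀) * gaussianBump a y₀ y)) :=
    funext₂ fun x y =>
      ((((hasDerivAt_gaussianBump y).const_mul _).sub_const E).const_mul M).deriv
  have hXX : dX (fun x y => M * (-2 * a * (x - x₀) * gaussianBump a x₀ x * gaussianBump a y₀ y))
      x y = M * ((4 * a ^ 2 * (x - x₀) ^ 2 - 2 * a) * gaussianBump a x₀ x * gaussianBump a y₀ y) :=
    (((hasDerivAt_deriv_gaussianBump x).mul_const _).const_mul M).deriv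
  have hYY : dY (fun x y => M * (gaussianBump a x₀ x * (-2 * a * (y - y₀) * gaussianBump a y₀ y)))
      x y
        = M * (gaussianBump a x₀ x * ((4 * a ^ 2 * (y - y₀) ^ 2 - 2 * a) * gaussianBump a y₀ y)) :=
    (((hasDerivAt_deriv_gaussianBump y).const_mul _).const_mul M).deriv
  simp only [driftLaplacian, hX, hY, hXX, hYY]
  ring

end GaussianBarrier

section Comparison

variable {φ : ℝ → ℝ → ℝ} {b f : ℝ → ℝ} {K : NNReal}

lemma mul_le_shift_sub_of_le_dY (hφ : Differentiable ℝ (fun p : ℝ × ℝ => φ p.1 p.2))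
    {m x y h : ℝ} (hh : 0 ≤ h) (hdY : ∀ t ∈ Icc y (y + h), m ≤ dY φ x t) :
    m * h ≤ φ x (y + h) - φ x y := by
  have hderiv (t : ℝ) : HasDerivAt (φ x) (dY φ x t) t := hasDerivAt_dY hφ x t
  simpa using (convex_Icc y (y + h)).mul_sub_le_image_sub_of_le_deriv
    (fun t _ => (hderiv t).continuousAt.continuousWithinAt)
    (fun t _ => (hderiv t).differentiableAt.differentiableWithinAt)
    (fun t ht => (hderiv t).deriv ▸ hdY t (interior_subset ht))
    y (left_mem_Icc.2 (by linarith)) (y + h) (right_mem_Icc.2 (by linarith))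
    (le_add_of_nonneg_right hh)

lemma contDiff_comp_add_const {n : WithTop ℕ∞} (hφ : ContDiff ℝ n (fun p : ℝ × ℝ => φ p.1 p.2))
    (h : ℝ) : ContDiff ℝ n (fun p : ℝ × ℝ => φ p.1 (p.2 + h)) :=
  hφ.comp (contDiff_fst.prodMk (contDiff_snd.add contDiff_const))

lemma driftLaplacian_shift_sub (hφ : ContDiff ℝ 2 (fun p : ℝ × ℝ => φ p.1 p.2))
    (heq : ∀ x y, driftLaplacian b φ x y + f (φ x y) = 0) (h x y : ℝ) :
    driftLaplacian b (fun x y => φ x (y + h) - φ x y) x y = f (φ x y) - f (φ x (y + h)) := by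
  rw [driftLaplacian_sub (u := fun x y => φ x (y + h)) (contDiff_comp_add_const hφ h) hφ,
    driftLaplacian_comp_add_const]
  linarith [heq x y, heq x (y + h)]

lemma gaussianBarrier_sub_shift_nonpos_of_isLocalMax
    (hφ : ContDiff ℝ 2 (fun p : ℝ × ℝ => φ p.1 p.2)) (hf : LipschitzWith K f)
    (heq : ∀ x y, driftLaplacian b φ x y + f (φ x y) = 0) (hmono : ∀ x, Monotone (φ x))
    {a B M E h x₀ y₀ ρ R x y : ℝ} (ha : 0 < a) (hM : 0 < M) (hE : 0 ≤ E) (hh : 0 ≤ h)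
    (hkey : 4 * a + 2 * a * R * B + K + 1 ≤ 4 * a ^ 2 * ρ ^ 2)
    (hbx : |b x| ≤ B) (hyR : |y - y₀| ≤ R) (hρ : ρ ^ 2 ≤ (x - x₀) ^ 2 + (y - y₀) ^ 2)
    (hmax : IsLocalMax (fun p : ℝ × ℝ => M * (gaussianBump a x₀ p.1 * gaussianBump a y₀ p.2 - E)
      - (φ p.1 (p.2 + h) - φ p.1 p.2)) (x, y)) :
    M * (gaussianBump a x₀ x * gaussianBump a y₀ y - E) - (φ x (y + h) - φ x y) ≤ 0 := by
  have hbarrier : ContDiff ℝ 2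
      (fun p : ℝ × ℝ => M * (gaussianBump a x₀ p.1 * gaussianBump a y₀ p.2 - E)) :=
    contDiff_const.mul (((contDiff_gaussianBump.comp contDiff_fst).mul
      (contDiff_gaussianBump.comp contDiff_snd)).sub contDiff_const)
  have hz : ContDiff ℝ 2 (fun p : ℝ × ℝ => φ p.1 (p.2 + h) - φ p.1 p.2) :=
    (contDiff_comp_add_const hφ h).sub hφ
  have hL := driftLaplacian_nonpos_of_isLocalMax (b := b)
    (u := fun x y => M * (gaussianBump a x₀ x * gaussianBump a y₀ y - E) - (φ x (y + h) - φ x y))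
    (hbarrier.sub hz) hmax
  rw [driftLaplacian_sub (u := fun x y => M * (gaussianBump a x₀ x * gaussianBump a y₀ y - E))
    (v := fun x y => φ x (y + h) - φ x y) hbarrier hz, driftLaplacian_gaussianBarrier,
    driftLaplacian_shift_sub hφ heq] at hL
  set G := gaussianBump a x₀ x * gaussianBump a y₀ y
  set z := φ x (y + h) - φ x y
  have hG : 0 < G := mul_pos (gaussianBump_pos x) (gaussianBump_pos y)
  have hz_nonneg : 0 ≤ z := sub_nonneg.2 (hmono x (le_add_of_nonneg_right hh))
  have hdrift : b x * (y - y₀) ≤ B * R := (le_abs_self _).trans <| by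
    rw [abs_mul]
    exact mul_le_mul hbx hyR (abs_nonneg _) ((abs_nonneg _).trans hbx)
  have hcoef : (K : ℝ) + 1
      ≤ 4 * a ^ 2 * ((x - x₀) ^ 2 + (y - y₀) ^ 2) - 4 * a - 2 * a * b x * (y - y₀) := by
    nlinarith [mul_le_mul_of_nonneg_left hρ (by positivity : (0 : ℝ) ≤ 4 * a ^ 2)]
  have hlip : -(K * z) ≤ f (φ x (y + h)) - f (φ x y) := by
    have := hf.dist_le_mul (φ x (y + h)) (φ x y)
    rw [Real.dist_eq, Real.dist_eq, abs_of_nonneg hz_nonneg] at this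
    linarith [neg_abs_le (f (φ x (y + h)) - f (φ x y))]
  -- if the maximum were positive then `z < M G`, making the drift Laplacian at least `M G > 0`
  by_contra! hpos
  have hzG : K * z ≤ K * (M * G) :=
    mul_le_mul_of_nonneg_left (by nlinarith) K.coe_nonneg
  have hMG : M * G * (K + 1) ≤ M * G * (4 * a ^ 2 * ((x - x₀) ^ 2 + (y - y₀) ^ 2) - 4 * a
      - 2 * a * b x * (y - y₀)) :=
    mul_le_mul_of_nonneg_left hcoef (mul_pos hM hG).le
  nlinarith [mul_pos hM hG]

lemma gaussianBarrier_le_shift_sub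
    (hφ : ContDiff ℝ 2 (fun p : ℝ × ℝ => φ p.1 p.2)) (hf : LipschitzWith K f)
    (heq : ∀ x y, driftLaplacian b φ x y + f (φ x y) = 0) (hmono : ∀ x, Monotone (φ x))
    {x₀ y₀ m ρ R B a h : ℝ} (hm : 0 < m)
    (hdY : ∀ x y, |x - x₀| ≤ 2 * ρ → |y - y₀| ≤ 2 * ρ → m ≤ dY φ x y)
    (hR : 0 ≤ R) (hB : ∀ x, |x - x₀| ≤ R → |b x| ≤ B) (ha : 0 < a)
    (hkey : 4 * a + 2 * a * R * B + K + 1 ≤ 4 * a ^ 2 * ρ ^ 2) (hh : 0 < h) (hhρ : h ≤ ρ)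
    {x y : ℝ} (hρx : ρ ^ 2 ≤ (x - x₀) ^ 2 + (y - y₀) ^ 2)
    (hRx : (x - x₀) ^ 2 + (y - y₀) ^ 2 ≤ R ^ 2) :
    m * h * (gaussianBump a x₀ x * gaussianBump a y₀ y - Real.exp (-a * R ^ 2))
      ≤ φ x (y + h) - φ x y := by
  have hφc := hφ.continuous
  have hρ : 0 ≤ ρ := hh.le.trans hhρ
  have hv : Continuous (fun p : ℝ × ℝ => m * h * (gaussianBump a x₀ p.1 * gaussianBump a y₀ p.2
      - Real.exp (-a * R ^ 2)) - (φ p.1 (p.2 + h) - φ p.1 p.2)) := by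
    have := (contDiff_gaussianBump (n := 0) (a := a) (t₀ := x₀)).continuous
    have := (contDiff_gaussianBump (n := 0) (a := a) (t₀ := y₀)).continuous
    fun_prop
  refine sub_nonpos.1 <|
    (isCompact_setOf_sq_add_sq_mem_Icc x₀ y₀ (ρ ^ 2) hR).forall_nonpos_of_isLocalMax
    (U := {p : ℝ × ℝ | (p.1 - x₀) ^ 2 + (p.2 - y₀) ^ 2 ∈ Ioo (ρ ^ 2) (R ^ 2)})
    (isOpen_Ioo.preimage (by fun_prop)) (fun p hp => ⟨hp.1.le, hp.2.le⟩) hv.continuousOn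
    ?_ ?_ (x, y) ⟨hρx, hRx⟩
  · rintro ⟨x, y⟩ ⟨⟨hin, hout⟩, hU⟩
    rcases not_and_or.1 hU with hin' | hout'
    · obtain ⟨hxρ, hyρ⟩ := abs_sub_le_of_sq_add_sq_le hρ (not_lt.1 hin')
      have hshift := mul_le_shift_sub_of_le_dY (x := x) (y := y) (hφ.differentiable two_ne_zero)
        hh.le fun t ht => hdY x t (by linarith) (abs_le.2 ⟨by linarith [(abs_le.1 hyρ).1, ht.1],
          by linarith [(abs_le.1 hyρ).2, ht.2]⟩)
      have hG : gaussianBump a x₀ x * gaussianBump a y₀ y ≤ 1 :=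
        mul_le_one₀ (gaussianBump_le_one ha.le x) (gaussianBump_pos y).le
          (gaussianBump_le_one ha.le y)
      nlinarith [Real.exp_pos (-a * R ^ 2), mul_pos hm hh]
    · have hG : gaussianBump a x₀ x * gaussianBump a y₀ y = Real.exp (-a * R ^ 2) := by
        rw [gaussianBump, gaussianBump, ← Real.exp_add, ← le_antisymm hout (not_lt.1 hout')]
        ring_nf
      rw [hG, sub_self, mul_zero, zero_sub, neg_nonpos, sub_nonneg]
      exact hmono x (le_add_of_nonneg_right hh.le)
  · rintro ⟨x, y⟩ ⟨hin, hout⟩ hmax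
    obtain ⟨hxR, hyR⟩ := abs_sub_le_of_sq_add_sq_le hR hout.le
    exact gaussianBarrier_sub_shift_nonpos_of_isLocalMax hφ hf heq hmono ha (mul_pos hm hh)
      (Real.exp_pos _).le hh.le hkey (hB x hxR) hyR hin.le hmax

theorem dY_pos_of_dY_pos
    (hφ : ContDiff ℝ 2 (fun p : ℝ × ℝ => φ p.1 p.2)) (hf : LipschitzWith K f)
    (heq : ∀ x y, driftLaplacian b φ x y + f (φ x y) = 0) (hmono : ∀ x, Monotone (φ x))
    (hb : Continuous b) {x₁ y₁ : ℝ} (h₁ : 0 < dY φ x₁ y₁) (x y : ℝ) : 0 < dY φ x y := by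
  set m := dY φ x₁ y₁ / 2
  have hm : 0 < m := half_pos h₁
  obtain ⟨ρ, hρ, hdY⟩ :
      ∃ ρ > 0, ∀ x y, |x - x₁| ≤ 2 * ρ → |y - y₁| ≤ 2 * ρ → m ≤ dY φ x y := by
    have hcont := (contDiff_dY hφ (m := 0) (by norm_num)).continuous
    obtain ⟨ε, hε, hball⟩ := Metric.eventually_nhds_iff.1
      ((hcont.tendsto (x₁, y₁)).eventually (eventually_gt_nhds (half_lt_self h₁)))
    refine ⟨ε / 4, by positivity, fun x y hx hy => le_of_lt (hball (y := (x, y)) ?_)⟩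
    rw [Prod.dist_eq, Real.dist_eq, Real.dist_eq]
    exact max_lt (by linarith) (by linarith)
  by_cases hnear : (x - x₁) ^ 2 + (y - y₁) ^ 2 < ρ ^ 2
  · obtain ⟨hx, hy⟩ := abs_sub_le_of_sq_add_sq_le hρ.le hnear.le
    exact hm.trans_le (hdY x y (by linarith) (by linarith))
  replace hnear := not_lt.1 hnear
  set R := |x - x₁| + |y - y₁| + 1
  have hR : 0 ≤ R := by positivity
  have hxR : (x - x₁) ^ 2 + (y - y₁) ^ 2 < R ^ 2 := by
    nlinarith [sq_abs (x - x₁), sq_abs (y - y₁), abs_nonneg (x - x₁), abs_nonneg (y - y₁)]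
  obtain ⟨B, hB⟩ : ∃ B, ∀ x, |x - x₁| ≤ R → |b x| ≤ B := by
    obtain ⟨B, hB⟩ := (isCompact_closedBall x₁ R).exists_bound_of_continuousOn hb.continuousOn
    exact ⟨B, fun x hx => hB x (by rwa [Metric.mem_closedBall, Real.dist_eq])⟩
  obtain ⟨a, ha, hkey⟩ := exists_pos_mul_add_le_sq_mul (4 + 2 * R * B)
    (by positivity : (0 : ℝ) ≤ K + 1) (by positivity : 0 < 4 * ρ ^ 2)
  have hE : Real.exp (-a * R ^ 2) < gaussianBump a x₁ x * gaussianBump a y₁ y := by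
    rw [gaussianBump, gaussianBump, ← Real.exp_add]
    exact Real.exp_lt_exp.2 (by nlinarith)
  refine (mul_pos hm (sub_pos.2 hE)).trans_le <|
    (hasDerivAt_dY (hφ.differentiable two_ne_zero) x y).le_of_forall_mul_le_sub hρ fun h hh => ?_
  have := gaussianBarrier_le_shift_sub hφ hf heq hmono hm hdY hR hB ha (by linarith) hh.1 hh.2
    hnear hxR.le
  linarith

end Comparison

lemma abs_mul_slopes_le (x α β : ℝ) :
    |x * (Real.cos α / Real.sin α)|
        ≤ |x| * (|Real.cos α / Real.sin α| + |Real.cos β / Real.sin β|) ∧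
      |-x * (Real.cos β / Real.sin β)|
        ≤ |x| * (|Real.cos α / Real.sin α| + |Real.cos β / Real.sin β|) := by
  rw [abs_mul, abs_mul, abs_neg]
  exact ⟨mul_le_mul_of_nonneg_left (le_add_of_nonneg_right (abs_nonneg _)) (abs_nonneg x),
    mul_le_mul_of_nonneg_left (le_add_of_nonneg_left (abs_nonneg _)) (abs_nonneg x)⟩

lemma mk_mem_Cminus {α β l x y : ℝ}
    (hy : y ≤ l - |x| * (|Real.cos α / Real.sin α| + |Real.cos β / Real.sin β|)) :
    (x, y) ∈ Cminus α β l := by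
  obtain ⟨hα, hβ⟩ := abs_mul_slopes_le x α β
  exact ⟨fun _ => by linarith [neg_abs_le (x * (Real.cos α / Real.sin α))],
    fun _ => by linarith [neg_abs_le (-x * (Real.cos β / Real.sin β))]⟩

lemma mk_mem_Cplus {α β l x y : ℝ}
    (hy : l + |x| * (|Real.cos α / Real.sin α| + |Real.cos β / Real.sin β|) < y) :
    (x, y) ∈ Cplus α β l := by
  obtain ⟨hα, hβ⟩ := abs_mul_slopes_le x α β
  refine subset_closure fun ⟨hleft, hright⟩ => ?_
  rcases le_total x 0 with hx | hx
  · linarith [hleft hx, le_abs_self (x * (Real.cos α / Real.sin α))]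
  · linarith [hright hx, le_abs_self (-x * (Real.cos β / Real.sin β))]

lemma exists_lt_of_conical {α β : ℝ} {φ : ℝ → ℝ → ℝ}
    (hcone0 : ∀ ε > (0:ℝ), ∃ l₀ : ℝ, ∀ l ≤ l₀, ∀ p ∈ Cminus α β l, φ p.1 p.2 ≤ ε)
    (hcone1 : ∀ ε > (0:ℝ), ∃ l₁ : ℝ, ∀ l ≥ l₁, ∀ p ∈ Cplus α β l, 1 - ε ≤ φ p.1 p.2) (x : ℝ) :
    ∃ y₁ y₂, φ x y₁ < φ x y₂ := by
  obtain ⟨l₀, hl₀⟩ := hcone0 (1 / 3) (by norm_num)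
  obtain ⟨l₁, hl₁⟩ := hcone1 (1 / 3) (by norm_num)
  set s := |x| * (|Real.cos α / Real.sin α| + |Real.cos β / Real.sin β|)
  have hlow := hl₀ l₀ le_rfl (x, l₀ - s) (mk_mem_Cminus le_rfl)
  have hhigh := hl₁ l₁ le_rfl (x, l₁ + s + 1) (mk_mem_Cplus (by linarith))
  exact ⟨l₀ - s, l₁ + s + 1, by dsimp only at hlow hhigh; linarith⟩

lemma exists_dY_pos_of_lt {φ : ℝ → ℝ → ℝ} (hφ : Differentiable ℝ (fun p : ℝ × ℝ => φ p.1 p.2))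
    {x y₁ y₂ : ℝ} (hmono : Monotone (φ x)) (hlt : φ x y₁ < φ x y₂) : ∃ y, 0 < dY φ x y := by
  by_contra! hnonpos
  have hanti : Antitone (φ x) :=
    antitone_of_deriv_nonpos (fun t => (hasDerivAt_dY hφ x t).differentiableAt) hnonpos
  rcases le_total y₁ y₂ with h | h
  · exact (hanti h).not_gt hlt
  · exact (hmono h).not_gt hlt

theorem stmt15_general (α β : ℝ) (c : ℝ) (q f : ℝ → ℝ) (hq : Continuous q)
    (hf : ∃ K : NNReal, LipschitzWith K f)
    (φ : ℝ → ℝ → ℝ) (hreg : ContDiff ℝ 2 (fun p : ℝ × ℝ => φ p.1 p.2))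
    (heq : ∀ x y : ℝ, dX (dX φ) x y + dY (dY φ) x y + (q x - c) * dY φ x y + f (φ x y) = 0)
    (hcone0 : ∀ ε > (0:ℝ), ∃ l₀ : ℝ, ∀ l ≤ l₀, ∀ p ∈ Cminus α β l, φ p.1 p.2 ≤ ε)
    (hcone1 : ∀ ε > (0:ℝ), ∃ l₁ : ℝ, ∀ l ≥ l₁, ∀ p ∈ Cplus α β l, 1 - ε ≤ φ p.1 p.2)
    (hmono : ∀ τ ≥ (0:ℝ), ∀ x y : ℝ, φ x y ≤ φ x (y + τ)) :
    ∀ x y : ℝ, 0 < dY φ x y := by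
  intro x y
  obtain ⟨K, hK⟩ := hf
  have hmono' : ∀ x, Monotone (φ x) := fun x y y' hyy' => by
    simpa using hmono (y' - y) (sub_nonneg.2 hyy') x y
  obtain ⟨y₁, y₂, hlt⟩ := exists_lt_of_conical hcone0 hcone1 x
  obtain ⟨y₀, hy₀⟩ := exists_dY_pos_of_lt (hreg.differentiable two_ne_zero) (hmono' x) hlt
  exact dY_pos_of_dY_pos (b := fun x => q x - c) hreg hK heq hmono' (hq.sub continuous_const)
    hy₀ x y

/-- If a conical front φ (0 < φ < 1, conical conditions at infinity) is nondecreasing in y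
(φ(x, y+τ) ≥ φ(x,y) for all τ ≥ 0), then ∂_yφ > 0 everywhere. -/
theorem stmt15 (α β : ℝ) (hα : α ∈ Set.Ioo 0 Real.pi) (hβ : β ∈ Set.Ioo 0 Real.pi)
    (L c : ℝ) (hL : 0 < L) (q f : ℝ → ℝ) (hq : Continuous q) (hqper : Function.Periodic q L)
    (hf : ∃ K : NNReal, LipschitzWith K f)
    (φ : ℝ → ℝ → ℝ) (hreg : ContDiff ℝ 2 (fun p : ℝ × ℝ => φ p.1 p.2))
    (hrange : ∀ x y : ℝ, φ x y ∈ Set.Ioo (0:ℝ) 1)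
    (heq : ∀ x y : ℝ, dX (dX φ) x y + dY (dY φ) x y + (q x - c) * dY φ x y + f (φ x y) = 0)
    (hcone0 : ∀ ε > (0:ℝ), ∃ l₀ : ℝ, ∀ l ≤ l₀, ∀ p ∈ Cminus α β l, φ p.1 p.2 ≤ ε)
    (hcone1 : ∀ ε > (0:ℝ), ∃ l₁ : ℝ, ∀ l ≥ l₁, ∀ p ∈ Cplus α β l, 1 - ε ≤ φ p.1 p.2)
    (hmono : ∀ τ ≥ (0:ℝ), ∀ x y : ℝ, φ x y ≤ φ x (y + τ)) :
    ∀ x y : ℝ, 0 < dY φ x y :=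
  stmt15_general α β c q f hq hf φ hreg heq hcone0 hcone1 hmono
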